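/- Let a₁, a₂ ∈ ℝ with a₁² + a₂² > 0. Then the integral ∫_{[0,1]²} ( sin²(πv₁) + sin²(πv₂) ) / ( 4·(a₁·sin(2πv₁) + a₂·sin(2πv₂))² + ( sin²(πv₁) + sin²(πv₂) )² ) dv₁ dv₂ is finite; that is, the nonnegative integrand is Lebesgue integrable on (0,1)². -/

import Mathlib

open MeasureTheory Real Set
open scoped ENNReal

lemma pi_sqrt2 : (4:ℝ) ≤ π * Real.sqrt 2 := by
  have h2 : Real.sqrt 2 ^ 2 = 2 := Real.sq_sqrt (by norm_num)
  have h0 : (0:ℝ) ≤ Real.sqrt 2 := Real.sqrt_nonneg 2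
  nlinarith [Real.pi_gt_d6]

lemma sin_two_pi_lower {x y : ℝ} (hy : 0 ≤ y) (hxy : y ≤ x) (hx : x ≤ 1/8) :
    4*(x - y) ≤ Real.sin (2*π*x) - Real.sin (2*π*y) := by
  have key : MonotoneOn (fun t : ℝ => Real.sin (2*π*t) - 4*t) (Icc 0 (1/8)) := by
    have hderiv : ∀ t : ℝ, HasDerivAt (fun t : ℝ => Real.sin (2*π*t) - 4*t)
        (2*π*Real.cos (2*π*t) - 4) t := by
      intro t
      have h1 : HasDerivAt (fun t : ℝ => 2*π*t) (2*π) t := by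
        simpa using (hasDerivAt_id t).const_mul (2*π)
      have h2 : HasDerivAt (fun t : ℝ => Real.sin (2*π*t)) (Real.cos (2*π*t) * (2*π)) t :=
        (Real.hasDerivAt_sin (2*π*t)).comp t h1
      have h3 : HasDerivAt (fun t : ℝ => 4*t) (4:ℝ) t := by
        simpa using (hasDerivAt_id t).const_mul (4:ℝ)
      exact (h2.sub h3).congr_deriv (by ring)
    apply monotoneOn_of_deriv_nonneg (convex_Icc _ _)
    · exact (Continuous.continuousOn (by continuity))
    · intro t ht
      exact (hderiv t).differentiableAt.differentiableWithinAt
    · intro t ht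
      rw [interior_Icc] at ht
      rw [(hderiv t).deriv]
      have hc : Real.cos (π/4) ≤ Real.cos (2*π*t) := by
        apply Real.cos_le_cos_of_nonneg_of_le_pi
        · nlinarith [Real.pi_pos, ht.1]
        · linarith [Real.pi_pos]
        · nlinarith [Real.pi_pos, ht.1.le, ht.2.le]
      rw [Real.cos_pi_div_four] at hc
      nlinarith [pi_sqrt2, Real.pi_pos]
  have h1 : (Real.sin (2*π*y) - 4*y) ≤ (Real.sin (2*π*x) - 4*x) := by
    apply key (by constructor <;> linarith) (by constructor <;> linarith) hxy
  linarith

lemma exists_root (A c : ℝ) (hA : 0 < A) :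
    ∃ r ∈ Set.Icc (0:ℝ) (1/8), ∀ x ∈ Set.Ioo (0:ℝ) (1/8),
      4*A*|x - r| ≤ |A * Real.sin (2*π*x) + c| := by
  set F : ℝ → ℝ := fun x => A * Real.sin (2*π*x) + c with hF
  have key : ∀ x y : ℝ, 0 ≤ y → y ≤ x → x ≤ 1/8 → 4*A*(x - y) ≤ F x - F y := by
    intro x y hy hxy hx
    have := sin_two_pi_lower hy hxy hx
    have : A * (4*(x-y)) ≤ A * (Real.sin (2*π*x) - Real.sin (2*π*y)) :=
      mul_le_mul_of_nonneg_left this hA.le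
    simp only [hF]; nlinarith
  have hF0 : F 0 = c := by simp [hF]
  by_cases hc : 0 ≤ c
  · refine ⟨0, by norm_num, fun x hx => ?_⟩
    have := key x 0 le_rfl hx.1.le hx.2.le
    have hax : 4*A*|x - 0| = 4*A*x := by rw [sub_zero, abs_of_pos hx.1]
    rw [hax]
    calc 4*A*x ≤ F x - F 0 := by simpa using key x 0 le_rfl hx.1.le hx.2.le
    _ ≤ F x := by rw [hF0]; linarith
    _ ≤ |F x| := le_abs_self _
  · by_cases hd : F (1/8) ≤ 0
    · refine ⟨1/8, by norm_num, fun x hx => ?_⟩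
      have hk := key (1/8) x hx.1.le hx.2.le le_rfl
      have hax : 4*A*|x - 1/8| = 4*A*(1/8 - x) := by
        rw [abs_of_neg (by linarith [hx.2])]; ring
      rw [hax]
      calc 4*A*(1/8 - x) ≤ F (1/8) - F x := hk
      _ ≤ -F x := by linarith
      _ ≤ |F x| := neg_le_abs _
    · push_neg at hc hd
      have hcont : ContinuousOn F (Icc 0 (1/8)) := by
        apply Continuous.continuousOn; continuity
      have : (0:ℝ) ∈ Icc (F 0) (F (1/8)) := by
        rw [hF0]; exact ⟨hc.le, hd.le⟩
      obtain ⟨r, hr, hFr⟩ := intermediate_value_Icc (by norm_num) hcont this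
      refine ⟨r, hr, fun x hx => ?_⟩
      rcases le_total x r with h | h
      · have hk := key r x hx.1.le h hr.2
        have hax : 4*A*|x - r| = 4*A*(r - x) := by
          rw [abs_sub_comm, abs_of_nonneg (by linarith)]
        rw [hax]
        calc 4*A*(r - x) ≤ F r - F x := hk
        _ = -F x := by rw [hFr]; ring
        _ ≤ |F x| := neg_le_abs _
      · have hk := key x r hr.1 h hx.2.le
        have hax : 4*A*|x - r| = 4*A*(x - r) := by
          rw [abs_of_nonneg (by linarith)]
        rw [hax]
        calc 4*A*(x - r) ≤ F x - F r := hk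
        _ = F x := by rw [hFr]; ring
        _ ≤ |F x| := le_abs_self _

lemma lint_rpow {p : ℝ} (hp : -1 < p) (δ : ℝ) :
    ∫⁻ x in Set.Ioo (0:ℝ) δ, ENNReal.ofReal (x ^ p) < ⊤ := by
  rcases le_or_gt δ 0 with h | h
  · rw [Set.Ioo_eq_empty (by linarith)]
    simp
  · have II := intervalIntegral.intervalIntegrable_rpow' (a := 0) (b := δ) hp
    rw [intervalIntegrable_iff_integrableOn_Ioo_of_le h.le] at II
    have := II.2
    simp only [HasFiniteIntegral] at this
    refine lt_of_le_of_lt (lintegral_mono fun x => ?_) this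
    rw [Real.enorm_eq_ofReal_abs]
    exact ENNReal.ofReal_le_ofReal (le_abs_self _)

lemma lint_shift (r : ℝ) (hr : r ∈ Set.Icc (0:ℝ) (1/8)) :
    ∫⁻ x in Set.Ioo (0:ℝ) (1/8), ENNReal.ofReal (|x - r| ^ (-(3:ℝ)/4)) ≤
      2 * ∫⁻ x in Set.Ioo (0:ℝ) (1/4), ENNReal.ofReal (x ^ (-(3:ℝ)/4)) := by
  have hGJ : (∫⁻ x in Set.Ioo (0:ℝ) (1/4), ENNReal.ofReal (|x| ^ (-(3:ℝ)/4)))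
      = ∫⁻ x in Set.Ioo (0:ℝ) (1/4), ENNReal.ofReal (x ^ (-(3:ℝ)/4)) :=
    setLIntegral_congr_fun measurableSet_Ioo
      (fun x hx => by simp only [abs_of_pos hx.1])
  have hneg : (∫⁻ x : ℝ, (Set.Ioo (0:ℝ) (1/4)).indicator
        (fun y => ENNReal.ofReal (|y| ^ (-(3:ℝ)/4))) (-x))
      = ∫⁻ x : ℝ, (Set.Ioo (0:ℝ) (1/4)).indicator
        (fun y => ENNReal.ofReal (|y| ^ (-(3:ℝ)/4))) x := by
    have h1 := lintegral_map_equiv (μ := volume)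
      ((Set.Ioo (0:ℝ) (1/4)).indicator (fun y => ENNReal.ofReal (|y| ^ (-(3:ℝ)/4))))
      (MeasurableEquiv.neg ℝ)
    have h2 : Measure.map (⇑(MeasurableEquiv.neg ℝ)) (volume : Measure ℝ) = volume := by
      have : ⇑(MeasurableEquiv.neg ℝ) = fun x : ℝ => -x := rfl
      rw [this]
      exact Measure.map_neg_eq_self volume
    rw [h2] at h1
    simpa [MeasurableEquiv.neg_apply] using h1.symm
  calc ∫⁻ x in Set.Ioo (0:ℝ) (1/8), ENNReal.ofReal (|x - r| ^ (-(3:ℝ)/4))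
      ≤ ∫⁻ x : ℝ, (Set.Ioo (-(1/4):ℝ) (1/4)).indicator
          (fun y => ENNReal.ofReal (|y| ^ (-(3:ℝ)/4))) (x - r) := by
        rw [← lintegral_indicator measurableSet_Ioo]
        apply lintegral_mono
        intro x
        beta_reduce
        by_cases hx : x ∈ Set.Ioo (0:ℝ) (1/8)
        · rw [Set.indicator_of_mem hx]
          have hmem : x - r ∈ Set.Ioo (-(1/4):ℝ) (1/4) := by
            simp only [Set.mem_Ioo] at hx ⊢
            constructor
            · linarith [hr.2, hx.1]
            · linarith [hr.1, hx.2]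
          rw [Set.indicator_of_mem hmem]
        · rw [Set.indicator_of_notMem hx]; exact zero_le
    _ = ∫⁻ x : ℝ, (Set.Ioo (-(1/4):ℝ) (1/4)).indicator
          (fun y => ENNReal.ofReal (|y| ^ (-(3:ℝ)/4))) x :=
        lintegral_sub_right_eq_self _ r
    _ = ∫⁻ x in Set.Ioo (-(1/4):ℝ) (1/4), ENNReal.ofReal (|x| ^ (-(3:ℝ)/4)) :=
        lintegral_indicator measurableSet_Ioo _
    _ ≤ ∫⁻ x in Set.Ioo (-(1/4):ℝ) 0 ∪ Set.Ico (0:ℝ) (1/4),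
          ENNReal.ofReal (|x| ^ (-(3:ℝ)/4)) := by
        apply lintegral_mono_set
        intro x hx
        rcases lt_or_ge x 0 with h | h
        · exact Or.inl ⟨hx.1, h⟩
        · exact Or.inr ⟨h, hx.2⟩
    _ ≤ (∫⁻ x in Set.Ioo (-(1/4):ℝ) 0, ENNReal.ofReal (|x| ^ (-(3:ℝ)/4))) +
          ∫⁻ x in Set.Ico (0:ℝ) (1/4), ENNReal.ofReal (|x| ^ (-(3:ℝ)/4)) :=
        lintegral_union_le _ _ _
    _ = (∫⁻ x in Set.Ioo (0:ℝ) (1/4), ENNReal.ofReal (|x| ^ (-(3:ℝ)/4))) +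
          ∫⁻ x in Set.Ioo (0:ℝ) (1/4), ENNReal.ofReal (|x| ^ (-(3:ℝ)/4)) := by
        congr 1
        · rw [← lintegral_indicator (measurableSet_Ioo (a := -(1/4:ℝ)) (b := 0)),
            ← lintegral_indicator (measurableSet_Ioo (a := (0:ℝ)) (b := 1/4)), ← hneg]
          apply lintegral_congr
          intro x
          beta_reduce
          by_cases hx : x ∈ Set.Ioo (-(1/4):ℝ) 0
          · rw [Set.indicator_of_mem hx, Set.indicator_of_mem (by
              simp only [Set.mem_Ioo] at hx ⊢
              constructor <;> linarith [hx.1, hx.2]), abs_neg]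
          · rw [Set.indicator_of_notMem hx, Set.indicator_of_notMem (by
              simp only [Set.mem_Ioo] at hx ⊢
              intro h
              exact hx ⟨by linarith [h.2], by linarith [h.1]⟩)]
        · exact (setLIntegral_congr (Ioo_ae_eq_Ico (a := (0:ℝ)) (b := 1/4))).symm
    _ = 2 * ∫⁻ x in Set.Ioo (0:ℝ) (1/4), ENNReal.ofReal (x ^ (-(3:ℝ)/4)) := by
        rw [hGJ]; ring

noncomputable def fab (a₁ a₂ : ℝ) (v : ℝ × ℝ) : ℝ :=
  (Real.sin (π * v.1) ^ 2 + Real.sin (π * v.2) ^ 2) /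
    (4 * (a₁ * Real.sin (2 * π * v.1) + a₂ * Real.sin (2 * π * v.2)) ^ 2 +
      (Real.sin (π * v.1) ^ 2 + Real.sin (π * v.2) ^ 2) ^ 2)

lemma meas_fab (a₁ a₂ : ℝ) : Measurable (fab a₁ a₂) := by
  unfold fab
  apply Measurable.div <;> fun_prop

lemma fab_nonneg (a₁ a₂ : ℝ) (v : ℝ × ℝ) : 0 ≤ fab a₁ a₂ v :=
  div_nonneg (by positivity) (by positivity)

lemma fab_le {a₁ a₂ A r x y : ℝ} (hA : 0 < A)
    (hx : x ∈ Set.Ioo (0:ℝ) (1/8)) (hy : y ∈ Set.Ioo (0:ℝ) (1/8)) (hne : x ≠ r)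
    (hroot : 4*A*|x - r| ≤ |a₁ * Real.sin (2*π*x) + a₂ * Real.sin (2*π*y)|) :
    fab a₁ a₂ (x, y) ≤
      ((2 * (8*A) ^ (-(3:ℝ)/4) * (4:ℝ) ^ (-(1:ℝ)/4)) * y ^ (-(1:ℝ)/2)) *
        |x - r| ^ (-(3:ℝ)/4) := by
  set γ : ℝ := a₁ * Real.sin (2*π*x) + a₂ * Real.sin (2*π*y) with hγ
  set θ : ℝ := Real.sin (π*x) ^ 2 + Real.sin (π*y) ^ 2 with hθ
  have hθpos : 0 < θ := by
    have h1 : 0 < Real.sin (π*x) := by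
      apply Real.sin_pos_of_pos_of_lt_pi
      · nlinarith [Real.pi_pos, hx.1]
      · nlinarith [Real.pi_pos, hx.1, hx.2, Real.pi_gt_three]
    positivity
  have hd : 0 < |x - r| := abs_pos.2 (sub_ne_zero.2 hne)
  have hden : (0:ℝ) < 4*γ^2 + θ^2 := by positivity
  -- step 1 : fab ≤ 2 / (2|γ| + θ)
  have step1 : fab a₁ a₂ (x, y) ≤ 2 / (2*|γ| + θ) := by
    have h2 : 0 < 2*|γ| + θ := by positivity
    rw [show fab a₁ a₂ (x, y) = θ / (4*γ^2 + θ^2) from rfl, div_le_div_iff₀ hden h2]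
    nlinarith [sq_nonneg (θ - |γ|), sq_abs γ, abs_nonneg γ]
  -- step 2 : sin (π y) ≥ 2 y
  have hsy : 4*y^2 ≤ Real.sin (π*y) ^ 2 := by
    have h1 : 2/π * (π*y) ≤ Real.sin (π*y) := by
      apply Real.mul_le_sin
      · nlinarith [Real.pi_pos, hy.1]
      · nlinarith [Real.pi_pos, hy.2]
    have h2 : (2:ℝ)*y ≤ Real.sin (π*y) := by
      have hpi := Real.pi_pos
      calc (2:ℝ)*y = 2/π * (π*y) := by field_simp
      _ ≤ _ := h1
    nlinarith [hy.1]
  -- step 3 : AM-GM lower bound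
  set P : ℝ := (8*A*|x-r|) ^ ((3:ℝ)/4) * (4*y^2) ^ ((1:ℝ)/4) with hP
  have hPpos : 0 < P := by
    have : (0:ℝ) < 8*A*|x-r| := by positivity
    have h4 : (0:ℝ) < 4*y^2 := by nlinarith [hy.1]
    positivity
  have step3 : P ≤ 2*|γ| + θ := by
    have amgm := Real.geom_mean_le_arith_mean2_weighted
      (w₁ := 3/4) (w₂ := 1/4) (p₁ := 8*A*|x-r|) (p₂ := 4*y^2)
      (by norm_num) (by norm_num) (by positivity) (by nlinarith [hy.1]) (by norm_num)
    have hγ8 : 8*A*|x-r| ≤ 2*|γ| := by linarith [hroot]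
    have hθ4 : 4*y^2 ≤ θ := by
      rw [hθ]
      nlinarith [sq_nonneg (Real.sin (π*x))]
    calc P ≤ 3/4 * (8*A*|x-r|) + 1/4 * (4*y^2) := amgm
    _ ≤ 2*|γ| + θ := by
        have h1 : (0:ℝ) ≤ 8*A*|x-r| := by positivity
        nlinarith [hy.1]
  have step4 : 2 / (2*|γ| + θ) ≤ 2 / P :=
    div_le_div_of_nonneg_left (by norm_num) hPpos step3
  -- step 5 : rewrite 2 / P
  have step5 : 2 / P =
      ((2 * (8*A) ^ (-(3:ℝ)/4) * (4:ℝ) ^ (-(1:ℝ)/4)) * y ^ (-(1:ℝ)/2)) *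
        |x - r| ^ (-(3:ℝ)/4) := by
    have e1 : (8*A*|x-r|) ^ ((3:ℝ)/4) = (8*A) ^ ((3:ℝ)/4) * |x-r| ^ ((3:ℝ)/4) :=
      Real.mul_rpow (by positivity) (abs_nonneg _)
    have e2 : (4*y^2) ^ ((1:ℝ)/4) = (4:ℝ) ^ ((1:ℝ)/4) * (y^2) ^ ((1:ℝ)/4) :=
      Real.mul_rpow (by norm_num) (sq_nonneg _)
    have e3 : ((y:ℝ)^2) ^ ((1:ℝ)/4) = y ^ ((1:ℝ)/2) := by
      rw [← Real.rpow_natCast y 2, ← Real.rpow_mul hy.1.le]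
      norm_num
    rw [hP, e1, e2, e3]
    rw [show ((-3:ℝ)/4) = -((3:ℝ)/4) from by norm_num,
      show ((-1:ℝ)/4) = -((1:ℝ)/4) from by norm_num,
      show ((-1:ℝ)/2) = -((1:ℝ)/2) from by norm_num]
    rw [Real.rpow_neg (by positivity : (0:ℝ) ≤ 8*A), Real.rpow_neg (by norm_num : (0:ℝ) ≤ (4:ℝ)),
      Real.rpow_neg hy.1.le, Real.rpow_neg (abs_nonneg (x - r))]
    have p1 : (0:ℝ) < (8*A) ^ ((3:ℝ)/4) := Real.rpow_pos_of_pos (by positivity) _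
    have p2 : (0:ℝ) < (4:ℝ) ^ ((1:ℝ)/4) := Real.rpow_pos_of_pos (by norm_num) _
    have p3 : (0:ℝ) < y ^ ((1:ℝ)/2) := Real.rpow_pos_of_pos hy.1 _
    have p4 : (0:ℝ) < |x-r| ^ ((3:ℝ)/4) := Real.rpow_pos_of_pos hd _
    have hneg3 : (-(3:ℝ)/4) = -((3:ℝ)/4) := by norm_num
    have hneg1 : (-(1:ℝ)/4) = -((1:ℝ)/4) := by norm_num
    have hneg2 : (-(1:ℝ)/2) = -((1:ℝ)/2) := by norm_num
    rw [div_eq_mul_inv, mul_inv, mul_inv]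
    ring
  calc fab a₁ a₂ (x, y) ≤ 2 / (2*|γ| + θ) := step1
  _ ≤ 2 / P := step4
  _ = _ := step5

lemma core (a₁ a₂ : ℝ) (h : a₁ ≠ 0) :
    IntegrableOn (fab a₁ a₂) (Set.Ioo (0:ℝ) (1/8) ×ˢ Set.Ioo (0:ℝ) (1/8)) volume := by
  have hA : 0 < |a₁| := abs_pos.2 h
  set C : ℝ := 2 * (8*|a₁|) ^ (-(3:ℝ)/4) * (4:ℝ) ^ (-(1:ℝ)/4) with hC
  have hCpos : 0 < C := by
    have := Real.rpow_pos_of_pos (show (0:ℝ) < 8*|a₁| by positivity) (-(3:ℝ)/4)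
    have := Real.rpow_pos_of_pos (show (0:ℝ) < (4:ℝ) by norm_num) (-(1:ℝ)/4)
    positivity
  set B : ℝ≥0∞ := 2 * ∫⁻ x in Set.Ioo (0:ℝ) (1/4), ENNReal.ofReal (x ^ (-(3:ℝ)/4)) with hB
  have hBlt : B < ⊤ := by
    rw [hB]
    exact ENNReal.mul_lt_top (by norm_num) (lint_rpow (by norm_num) (1/4))
  constructor
  · exact (meas_fab a₁ a₂).aestronglyMeasurable
  · rw [hasFiniteIntegral_iff_ofReal (Filter.Eventually.of_forall fun v => fab_nonneg a₁ a₂ v)]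
    have hmeas : Measurable fun v : ℝ × ℝ => ENNReal.ofReal (fab a₁ a₂ v) :=
      (meas_fab a₁ a₂).ennreal_ofReal
    rw [Measure.volume_eq_prod, ← Measure.prod_restrict,
      lintegral_prod_symm _ hmeas.aemeasurable]
    have inner_bound : ∀ y ∈ Set.Ioo (0:ℝ) (1/8),
        (∫⁻ x in Set.Ioo (0:ℝ) (1/8), ENNReal.ofReal (fab a₁ a₂ (x, y))) ≤
          ENNReal.ofReal (C * y ^ (-(1:ℝ)/2)) * B := by
      intro y hy
      set c : ℝ := if 0 < a₁ then a₂ * Real.sin (2*π*y) else -(a₂ * Real.sin (2*π*y)) with hc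
      obtain ⟨r, hr, hroot⟩ := exists_root |a₁| c hA
      have habs : ∀ x : ℝ, abs (|a₁| * Real.sin (2*π*x) + c) =
          |a₁ * Real.sin (2*π*x) + a₂ * Real.sin (2*π*y)| := by
        intro x
        rcases lt_or_gt_of_ne h with hneg | hpos
        · rw [hc, if_neg (by linarith), abs_of_neg hneg]
          rw [show -a₁ * Real.sin (2*π*x) + -(a₂ * Real.sin (2*π*y)) =
            -(a₁ * Real.sin (2*π*x) + a₂ * Real.sin (2*π*y)) by ring, abs_neg]
        · rw [hc, if_pos hpos, abs_of_pos hpos]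
      have hae : ∀ᵐ x ∂(volume.restrict (Set.Ioo (0:ℝ) (1/8))), x ≠ r := by
        refine ae_restrict_of_ae ?_
        rw [ae_iff]
        have : {x : ℝ | ¬ x ≠ r} = {r} := by ext x; simp
        rw [this]
        exact Real.volume_singleton
      calc (∫⁻ x in Set.Ioo (0:ℝ) (1/8), ENNReal.ofReal (fab a₁ a₂ (x, y)))
          ≤ ∫⁻ x in Set.Ioo (0:ℝ) (1/8),
              ENNReal.ofReal (C * y ^ (-(1:ℝ)/2)) * ENNReal.ofReal (|x - r| ^ (-(3:ℝ)/4)) := by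
            refine lintegral_mono_ae ?_
            filter_upwards [hae, ae_restrict_mem measurableSet_Ioo] with x hne hmem
            rw [← ENNReal.ofReal_mul (mul_nonneg hCpos.le (Real.rpow_nonneg hy.1.le _))]
            apply ENNReal.ofReal_le_ofReal
            have := fab_le (a₁ := a₁) (a₂ := a₂) hA hmem hy hne
              (by rw [← habs x]; exact hroot x hmem)
            simpa [hC] using this
        _ = ENNReal.ofReal (C * y ^ (-(1:ℝ)/2)) *
              ∫⁻ x in Set.Ioo (0:ℝ) (1/8), ENNReal.ofReal (|x - r| ^ (-(3:ℝ)/4)) := by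
            rw [lintegral_const_mul]
            fun_prop
        _ ≤ ENNReal.ofReal (C * y ^ (-(1:ℝ)/2)) * B :=
            mul_le_mul_right (lint_shift r hr) _
    calc (∫⁻ y in Set.Ioo (0:ℝ) (1/8), ∫⁻ x in Set.Ioo (0:ℝ) (1/8),
            ENNReal.ofReal (fab a₁ a₂ (x, y)))
        ≤ ∫⁻ y in Set.Ioo (0:ℝ) (1/8), ENNReal.ofReal (C * y ^ (-(1:ℝ)/2)) * B := by
          refine lintegral_mono_ae ?_
          filter_upwards [ae_restrict_mem measurableSet_Ioo] with y hy
          exact inner_bound y hy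
      _ = (ENNReal.ofReal C * B) * ∫⁻ y in Set.Ioo (0:ℝ) (1/8),
            ENNReal.ofReal (y ^ (-(1:ℝ)/2)) := by
          rw [← lintegral_const_mul]
          · apply lintegral_congr
            intro y
            rw [ENNReal.ofReal_mul hCpos.le]
            ring
          · fun_prop
      _ < ⊤ := by
          apply ENNReal.mul_lt_top
          · exact ENNReal.mul_lt_top ENNReal.ofReal_lt_top hBlt
          · exact lint_rpow (by norm_num) (1/8)

lemma fab_swap (a₁ a₂ : ℝ) (v : ℝ × ℝ) : fab a₁ a₂ v = fab a₂ a₁ v.swap := by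
  unfold fab
  simp only [Prod.snd_swap, Prod.fst_swap]
  ring_nf

lemma fab_refl1 (a₁ a₂ : ℝ) (v : ℝ × ℝ) : fab a₁ a₂ v = fab (-a₁) a₂ (1 - v.1, v.2) := by
  unfold fab
  simp only
  have h1 : Real.sin (π * (1 - v.1)) = Real.sin (π * v.1) := by
    rw [show π * (1 - v.1) = π - π * v.1 by ring, Real.sin_pi_sub]
  have h2 : Real.sin (2 * π * (1 - v.1)) = -Real.sin (2 * π * v.1) := by
    rw [show 2 * π * (1 - v.1) = 2 * π - 2 * π * v.1 by ring, Real.sin_sub,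
      Real.sin_two_pi, Real.cos_two_pi]
    ring
  rw [h1, h2]
  ring_nf

lemma fab_refl2 (a₁ a₂ : ℝ) (v : ℝ × ℝ) : fab a₁ a₂ v = fab a₁ (-a₂) (v.1, 1 - v.2) := by
  rw [fab_swap, fab_refl1 a₂ a₁ v.swap, fab_swap]
  rfl

lemma transfer_swap {a₁ a₂ : ℝ} {s t : Set ℝ}
    (h : IntegrableOn (fab a₂ a₁) (t ×ˢ s) volume) :
    IntegrableOn (fab a₁ a₂) (s ×ˢ t) volume := by
  have hmp : MeasurePreserving (Prod.swap : ℝ × ℝ → ℝ × ℝ)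
      (volume : Measure (ℝ × ℝ)) (volume : Measure (ℝ × ℝ)) := by
    rw [Measure.volume_eq_prod]
    exact Measure.measurePreserving_swap
  have hemb : MeasurableEmbedding (Prod.swap : ℝ × ℝ → ℝ × ℝ) :=
    MeasurableEquiv.prodComm.measurableEmbedding
  have hfun : fab a₁ a₂ = (fab a₂ a₁) ∘ Prod.swap := funext fun v => fab_swap a₁ a₂ v
  have hpre : (Prod.swap : ℝ × ℝ → ℝ × ℝ) ⁻¹' (t ×ˢ s) = s ×ˢ t := by
    ext p
    simp only [Set.mem_preimage, Set.mem_prod, Prod.fst_swap, Prod.snd_swap]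
    tauto
  rw [hfun, ← hpre]
  exact (hmp.integrableOn_comp_preimage hemb).2 h

lemma transfer_refl1 {a₁ a₂ : ℝ} {t : Set ℝ}
    (h : IntegrableOn (fab (-a₁) a₂) (Set.Ioo (0:ℝ) (1/8) ×ˢ t) volume) :
    IntegrableOn (fab a₁ a₂) (Set.Ioo (7/8:ℝ) 1 ×ˢ t) volume := by
  set e : ℝ × ℝ → ℝ × ℝ := Prod.map (fun x : ℝ => 1 - x) id with he
  have hmp : MeasurePreserving e (volume : Measure (ℝ × ℝ)) (volume : Measure (ℝ × ℝ)) := by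
    rw [Measure.volume_eq_prod]
    exact (Measure.measurePreserving_sub_left volume 1).prod (MeasurePreserving.id volume)
  have hemb : MeasurableEmbedding e :=
    (MeasurableEquiv.prodCongr (MeasurableEquiv.subLeft (1:ℝ))
      (MeasurableEquiv.refl ℝ)).measurableEmbedding
  have hfun : fab a₁ a₂ = (fab (-a₁) a₂) ∘ e := funext fun v => fab_refl1 a₁ a₂ v
  have hpre : e ⁻¹' (Set.Ioo (0:ℝ) (1/8) ×ˢ t) = Set.Ioo (7/8:ℝ) 1 ×ˢ t := by
    ext p
    simp only [he, Set.mem_preimage, Set.mem_prod, Prod.map_fst, Prod.map_snd, id_eq, Set.mem_Ioo]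
    constructor
    · rintro ⟨⟨u1, u2⟩, hu⟩
      exact ⟨⟨by linarith, by linarith⟩, hu⟩
    · rintro ⟨⟨u1, u2⟩, hu⟩
      exact ⟨⟨by linarith, by linarith⟩, hu⟩
  rw [hfun, ← hpre]
  exact (hmp.integrableOn_comp_preimage hemb).2 h

lemma corner00 (a₁ a₂ : ℝ) (h : a₁ ≠ 0 ∨ a₂ ≠ 0) :
    IntegrableOn (fab a₁ a₂) (Set.Ioo (0:ℝ) (1/8) ×ˢ Set.Ioo (0:ℝ) (1/8)) volume := by
  rcases h with h | h
  · exact core a₁ a₂ h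
  · exact transfer_swap (core a₂ a₁ h)

lemma corner10 (a₁ a₂ : ℝ) (h : a₁ ≠ 0 ∨ a₂ ≠ 0) :
    IntegrableOn (fab a₁ a₂) (Set.Ioo (7/8:ℝ) 1 ×ˢ Set.Ioo (0:ℝ) (1/8)) volume :=
  transfer_refl1 (corner00 (-a₁) a₂ (by rcases h with h | h; exacts [Or.inl (neg_ne_zero.2 h), Or.inr h]))

lemma corner01 (a₁ a₂ : ℝ) (h : a₁ ≠ 0 ∨ a₂ ≠ 0) :
    IntegrableOn (fab a₁ a₂) (Set.Ioo (0:ℝ) (1/8) ×ˢ Set.Ioo (7/8:ℝ) 1) volume :=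
  transfer_swap (corner10 a₂ a₁ (by tauto))

lemma corner11 (a₁ a₂ : ℝ) (h : a₁ ≠ 0 ∨ a₂ ≠ 0) :
    IntegrableOn (fab a₁ a₂) (Set.Ioo (7/8:ℝ) 1 ×ˢ Set.Ioo (7/8:ℝ) 1) volume :=
  transfer_refl1 (corner01 (-a₁) a₂ (by rcases h with h | h; exacts [Or.inl (neg_ne_zero.2 h), Or.inr h]))

lemma sin_lb {u : ℝ} (hu : u ∈ Set.Icc (1/8:ℝ) (7/8)) :
    Real.sin (π/8) ≤ Real.sin (π*u) := by
  have hpi := Real.pi_pos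
  have key : ∀ w : ℝ, w ∈ Set.Icc (1/8:ℝ) (1/2) → Real.sin (π/8) ≤ Real.sin (π*w) := by
    intro w hw
    apply Real.strictMonoOn_sin.monotoneOn ?_ ?_ (by nlinarith [hw.1])
    · constructor <;> [nlinarith; nlinarith]
    · constructor <;> [nlinarith [hw.1]; nlinarith [hw.2]]
  rcases le_total u (1/2) with hu2 | hu2
  · exact key u ⟨hu.1, hu2⟩
  · have := key (1 - u) ⟨by linarith [hu.2], by linarith⟩
    rwa [show π * (1 - u) = π - π * u by ring, Real.sin_pi_sub] at this
lemma middle (a₁ a₂ : ℝ) :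
    IntegrableOn (fab a₁ a₂)
      ((Set.Ioo (0:ℝ) 1 ×ˢ Set.Ioo (0:ℝ) 1) \
        ((Set.Ioo (0:ℝ) (1/8) ×ˢ Set.Ioo (0:ℝ) (1/8)) ∪
         (Set.Ioo (7/8:ℝ) 1 ×ˢ Set.Ioo (0:ℝ) (1/8)) ∪
         (Set.Ioo (0:ℝ) (1/8) ×ˢ Set.Ioo (7/8:ℝ) 1) ∪
         (Set.Ioo (7/8:ℝ) 1 ×ˢ Set.Ioo (7/8:ℝ) 1))) volume := by
  set M := (Set.Ioo (0:ℝ) 1 ×ˢ Set.Ioo (0:ℝ) 1) \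
        ((Set.Ioo (0:ℝ) (1/8) ×ˢ Set.Ioo (0:ℝ) (1/8)) ∪
         (Set.Ioo (7/8:ℝ) 1 ×ˢ Set.Ioo (0:ℝ) (1/8)) ∪
         (Set.Ioo (0:ℝ) (1/8) ×ˢ Set.Ioo (7/8:ℝ) 1) ∪
         (Set.Ioo (7/8:ℝ) 1 ×ˢ Set.Ioo (7/8:ℝ) 1)) with hM
  have hs8 : 0 < Real.sin (π/8) := by
    apply Real.sin_pos_of_pos_of_lt_pi
    · positivity
    · linarith [Real.pi_pos]
  have hMmeas : MeasurableSet M := by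
    apply MeasurableSet.diff
    · exact measurableSet_Ioo.prod measurableSet_Ioo
    · exact (((measurableSet_Ioo.prod measurableSet_Ioo).union
        (measurableSet_Ioo.prod measurableSet_Ioo)).union
        (measurableSet_Ioo.prod measurableSet_Ioo)).union
        (measurableSet_Ioo.prod measurableSet_Ioo)
  refine Measure.integrableOn_of_bounded (M := 1 / Real.sin (π/8) ^ 2) ?_ ?_ ?_
  · apply ne_of_lt
    calc volume M ≤ volume (Set.Ioo (0:ℝ) 1 ×ˢ Set.Ioo (0:ℝ) 1) :=
          measure_mono Set.diff_subset
    _ < ⊤ := by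
        rw [Measure.volume_eq_prod, Measure.prod_prod]
        simp
  · exact (meas_fab a₁ a₂).aestronglyMeasurable
  · rw [ae_restrict_iff' hMmeas]
    refine Filter.Eventually.of_forall fun v hv => ?_
    -- θ is bounded below
    have hθlb : Real.sin (π/8) ^ 2 ≤ Real.sin (π * v.1) ^ 2 + Real.sin (π * v.2) ^ 2 := by
      have hcases : v.1 ∈ Set.Icc (1/8:ℝ) (7/8) ∨ v.2 ∈ Set.Icc (1/8:ℝ) (7/8) := by
        rw [hM] at hv
        obtain ⟨⟨h1, h2⟩, hnot⟩ := hv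
        simp only [Set.mem_Ioo] at h1 h2
        by_contra hcon
        push_neg at hcon
        obtain ⟨hc1, hc2⟩ := hcon
        simp only [Set.mem_Icc, not_and_or, not_le] at hc1 hc2
        apply hnot
        rcases hc1 with hc1 | hc1 <;> rcases hc2 with hc2 | hc2
        · exact Or.inl (Or.inl (Or.inl ⟨⟨h1.1, hc1⟩, h2.1, hc2⟩))
        · exact Or.inl (Or.inr ⟨⟨h1.1, hc1⟩, hc2, h2.2⟩)
        · exact Or.inl (Or.inl (Or.inr ⟨⟨hc1, h1.2⟩, h2.1, hc2⟩))
        · exact Or.inr ⟨⟨hc1, h1.2⟩, hc2, h2.2⟩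
      rcases hcases with hc | hc
      · nlinarith [sin_lb hc, sq_nonneg (Real.sin (π * v.2)), hs8]
      · nlinarith [sin_lb hc, sq_nonneg (Real.sin (π * v.1)), hs8]
    have hθpos : 0 < Real.sin (π * v.1) ^ 2 + Real.sin (π * v.2) ^ 2 := by nlinarith [hs8]
    rw [Real.norm_eq_abs, abs_of_nonneg (fab_nonneg a₁ a₂ v)]
    unfold fab
    rw [div_le_div_iff₀ (by positivity) (by positivity)]
    set θ := Real.sin (π * v.1) ^ 2 + Real.sin (π * v.2) ^ 2
    set γ := a₁ * Real.sin (2 * π * v.1) + a₂ * Real.sin (2 * π * v.2)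
    nlinarith [sq_nonneg γ, sq_nonneg (Real.sin (π/8)), hs8, hθpos, hθlb,
      mul_le_mul_of_nonneg_left hθlb hθpos.le]

theorem stmt_16 (a₁ a₂ : ℝ) (ha : 0 < a₁ ^ 2 + a₂ ^ 2) :
    IntegrableOn
      (fun v : ℝ × ℝ =>
        (Real.sin (π * v.1) ^ 2 + Real.sin (π * v.2) ^ 2) /
          (4 * (a₁ * Real.sin (2 * π * v.1) + a₂ * Real.sin (2 * π * v.2)) ^ 2 +
            (Real.sin (π * v.1) ^ 2 + Real.sin (π * v.2) ^ 2) ^ 2))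
      ((Set.Ioo (0 : ℝ) 1) ×ˢ (Set.Ioo (0 : ℝ) 1)) volume := by
  have h : a₁ ≠ 0 ∨ a₂ ≠ 0 := by
    by_contra hcon
    push_neg at hcon
    rw [hcon.1, hcon.2] at ha
    norm_num at ha
  have hfab : (fun v : ℝ × ℝ =>
        (Real.sin (π * v.1) ^ 2 + Real.sin (π * v.2) ^ 2) /
          (4 * (a₁ * Real.sin (2 * π * v.1) + a₂ * Real.sin (2 * π * v.2)) ^ 2 +
            (Real.sin (π * v.1) ^ 2 + Real.sin (π * v.2) ^ 2) ^ 2)) = fab a₁ a₂ := rfl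
  rw [hfab]
  have hunion := ((((middle a₁ a₂).union (corner00 a₁ a₂ h)).union
    (corner10 a₁ a₂ h)).union (corner01 a₁ a₂ h)).union (corner11 a₁ a₂ h)
  apply hunion.mono_set
  intro v hv
  by_cases hc : v ∈ (Set.Ioo (0:ℝ) (1/8) ×ˢ Set.Ioo (0:ℝ) (1/8)) ∪
         (Set.Ioo (7/8:ℝ) 1 ×ˢ Set.Ioo (0:ℝ) (1/8)) ∪
         (Set.Ioo (0:ℝ) (1/8) ×ˢ Set.Ioo (7/8:ℝ) 1) ∪
         (Set.Ioo (7/8:ℝ) 1 ×ˢ Set.Ioo (7/8:ℝ) 1)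
  · rcases hc with ((hc | hc) | hc) | hc
    · exact Or.inl (Or.inl (Or.inl (Or.inr hc)))
    · exact Or.inl (Or.inl (Or.inr hc))
    · exact Or.inl (Or.inr hc)
    · exact Or.inr hc
  · exact Or.inl (Or.inl (Or.inl (Or.inl ⟨hv, hc⟩)))
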